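/- Assume in addition that a group 𝒢 of bijections of E acts on E satisfying: (R0) 𝒢 is closed under composition and inverses, every g ∈ 𝒢 commutes with Ψ (g ∘ Ψ = Ψ ∘ g), and there is r̄ > 0 such that every g ∈ 𝒢 is 2-bi-Lipschitz near 0: if ‖x‖, ‖y‖, ‖g(x)‖, ‖g(y)‖ < r̄ then (1/2)‖x−y‖ ≤ ‖g(x)−g(y)‖ ≤ 2‖x−y‖; let ℛ₀ = {g(0) : g ∈ 𝒢} be the orbit of 0; (R1) there exist r₀ > 0 and a continuous strictly increasing function d₀ on [0,r₀) with d₀(0)=0 so that whenever ‖x‖ < r₀ and ‖x₂‖_Q ≤ ‖x₁‖_Q, the distance dist(x, ℛ₀) in the Banach norm is at least d₀(‖x‖); (R2) there exist r₁ > 0 and a continuous function δ₀ on ℝ with δ₀(0)=0 so that whenever r ≤ r₁, g ∈ 𝒢, and ‖x‖, ‖y‖, ‖g(x)‖ < r/3, then ‖g(y)‖ < r, ‖x₁−y₁‖_Q − δ₀(r)‖x−y‖_Q ≤ ‖(g(y)−g(x))₁‖_Q, and ‖(g(y)−g(x))₂‖_Q ≤ ‖x₂−y₂‖_Q + δ₀(r)‖x−y‖_Q.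 For s > 0 let W₀ = {x ∈ E : for every n ≥ 0 there exists g_n ∈ 𝒢 with ‖g_n(Ψⁿ(x))‖ ≤ s}. Then for all sufficiently small s > 0, the set B_s ∩ W₀ is the graph over E₂ of a map u : P₂(W₀ ∩ B_s) → E₁ that is Q-Lipschitz with norm one; in particular, if x ∈ B_s ∩ W₀ and y ∈ B_s satisfy ‖x₂ − y₂‖_Q < ‖x₁ − y₁‖_Q, then y ∉ W₀. -/
import Mathlib

set_option maxHeartbeats 1000000


/-- The `Q`-norm `‖x‖_Q = √(Q x x)` associated to a bilinear form `Q`. -/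
noncomputable def normQ {E : Type*} [AddCommGroup E] [Module ℝ E]
    (Q : E →ₗ[ℝ] E →ₗ[ℝ] ℝ) (x : E) : ℝ :=
  Real.sqrt (Q x x)

/-- The set `W₀` of points whose `Ψ`-trajectories never leave the closed `s`-tubular
neighborhood of the orbit of `0` under the group `G`: for every `n ≥ 0` there is
`gₙ ∈ G` with `‖gₙ(Ψⁿ x)‖ ≤ s`. -/
def tubularInvariantSet {E : Type*} [NormedAddCommGroup E]
    (Ψ : E → E) (G : Set (E → E)) (s : ℝ) : Set E :=
  {x : E | ∀ n : ℕ, ∃ g ∈ G, ‖g (Ψ^[n] x)‖ ≤ s}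


section Aux
variable {E : Type*} [AddCommGroup E] [Module ℝ E] (Q : E →ₗ[ℝ] E →ₗ[ℝ] ℝ)

lemma normQ_nonneg (x : E) : 0 ≤ normQ Q x := Real.sqrt_nonneg _

lemma Q_nonneg (hQpos : ∀ x : E, x ≠ 0 → 0 < Q x x) (z : E) : 0 ≤ Q z z := by
  by_cases h : z = 0
  · simp [h]
  · exact (hQpos z h).le

lemma normQ_sq (hQpos : ∀ x : E, x ≠ 0 → 0 < Q x x) (x : E) :
    normQ Q x ^ 2 = Q x x := Real.sq_sqrt (Q_nonneg Q hQpos x)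

lemma normQ_neg (x : E) : normQ Q (-x) = normQ Q x := by
  simp [normQ]

lemma normQ_zero : normQ Q (0 : E) = 0 := by simp [normQ]

lemma normQ_sub_rev (a b : E) : normQ Q (a - b) = normQ Q (b - a) := by
  rw [← normQ_neg Q (b - a), neg_sub]

lemma normQ_eq_zero (hQpos : ∀ x : E, x ≠ 0 → 0 < Q x x) {z : E}
    (h : normQ Q z = 0) : z = 0 := by
  by_contra hz
  have h1 : 0 < Q z z := hQpos z hz
  have : 0 < normQ Q z := Real.sqrt_pos.mpr h1
  linarith

lemma normQ_pos (hQpos : ∀ x : E, x ≠ 0 → 0 < Q x x) {z : E} (hz : z ≠ 0) :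
    0 < normQ Q z := Real.sqrt_pos.mpr (hQpos z hz)

lemma Q_cauchy_schwarz (hQsymm : ∀ x y : E, Q x y = Q y x)
    (hQpos : ∀ x : E, x ≠ 0 → 0 < Q x x) (x y : E) :
    Q x y * Q x y ≤ Q x x * Q y y := by
  have hQnn := Q_nonneg Q hQpos
  have h : ∀ t : ℝ, 0 ≤ Q y y * (t * t) + (2 * Q x y) * t + Q x x := by
    intro t
    have h0 := hQnn (x + t • y)
    have e : Q (x + t • y) (x + t • y)
        = Q y y * (t * t) + (2 * Q x y) * t + Q x x := by
      simp only [map_add, map_smul, LinearMap.add_apply, LinearMap.smul_apply,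
        smul_eq_mul]
      rw [hQsymm y x]; ring
    linarith [e ▸ h0]
  have hd := discrim_le_zero h
  rw [discrim] at hd
  nlinarith [hd]

lemma Q_inner_le (hQsymm : ∀ x y : E, Q x y = Q y x)
    (hQpos : ∀ x : E, x ≠ 0 → 0 < Q x x) (x y : E) :
    Q x y ≤ normQ Q x * normQ Q y := by
  have hQnn := Q_nonneg Q hQpos
  have h1 : Q x y ≤ |Q x y| := le_abs_self _
  have h2 : |Q x y| = Real.sqrt (Q x y * Q x y) := by
    rw [Real.sqrt_mul_self_eq_abs]
  have h3 : Real.sqrt (Q x y * Q x y) ≤ Real.sqrt (Q x x * Q y y) :=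
    Real.sqrt_le_sqrt (Q_cauchy_schwarz Q hQsymm hQpos x y)
  have h4 : Real.sqrt (Q x x * Q y y) = normQ Q x * normQ Q y := by
    rw [normQ, normQ, ← Real.sqrt_mul (hQnn x)]
  linarith [h2 ▸ h1, h4 ▸ h3]

lemma normQ_add_le (hQsymm : ∀ x y : E, Q x y = Q y x)
    (hQpos : ∀ x : E, x ≠ 0 → 0 < Q x x) (x y : E) :
    normQ Q (x + y) ≤ normQ Q x + normQ Q y := by
  have hQnn := Q_nonneg Q hQpos
  have e : Q (x + y) (x + y) = Q x x + 2 * Q x y + Q y y := by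
    simp only [map_add, LinearMap.add_apply]
    rw [hQsymm y x]; ring
  have hx := Real.sq_sqrt (hQnn x)
  have hy := Real.sq_sqrt (hQnn y)
  have hcs := Q_inner_le Q hQsymm hQpos x y
  have hbnd : Q (x + y) (x + y) ≤ (normQ Q x + normQ Q y) ^ 2 := by
    rw [e]
    have : (normQ Q x + normQ Q y) ^ 2
        = normQ Q x ^ 2 + 2 * (normQ Q x * normQ Q y) + normQ Q y ^ 2 := by ring
    unfold normQ at hcs this ⊢; rw [this, hx, hy]; linarith
  calc normQ Q (x + y) = Real.sqrt (Q (x + y) (x + y)) := rfl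
    _ ≤ Real.sqrt ((normQ Q x + normQ Q y) ^ 2) := Real.sqrt_le_sqrt hbnd
    _ = normQ Q x + normQ Q y :=
        Real.sqrt_sq (by have := normQ_nonneg Q x; have := normQ_nonneg Q y; linarith)

lemma normQ_sub_le (hQsymm : ∀ x y : E, Q x y = Q y x)
    (hQpos : ∀ x : E, x ≠ 0 → 0 < Q x x) (u v : E) :
    normQ Q u - normQ Q v ≤ normQ Q (u + v) := by
  have h := normQ_add_le Q hQsymm hQpos (u + v) (-v)
  rw [add_neg_cancel_right, normQ_neg] at h
  linarith

lemma normQ_le_sqrt_norm {E : Type*} [NormedAddCommGroup E] [NormedSpace ℝ E]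
    (Q : E →ₗ[ℝ] E →ₗ[ℝ] ℝ) (C_Q : ℝ) (hCQpos : 0 < C_Q)
    (hQbd : ∀ x y : E, |Q x y| ≤ C_Q * ‖x‖ * ‖y‖) (z : E) :
    normQ Q z ≤ Real.sqrt C_Q * ‖z‖ := by
  have h1 : Q z z ≤ C_Q * ‖z‖ * ‖z‖ := le_trans (le_abs_self _) (hQbd z z)
  calc normQ Q z = Real.sqrt (Q z z) := rfl
    _ ≤ Real.sqrt (C_Q * (‖z‖ * ‖z‖)) := Real.sqrt_le_sqrt (by linarith)
    _ = Real.sqrt C_Q * Real.sqrt (‖z‖ * ‖z‖) := Real.sqrt_mul hCQpos.le _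
    _ = Real.sqrt C_Q * ‖z‖ := by rw [Real.sqrt_mul_self (norm_nonneg z)]

end Aux

section Split
variable {E : Type*} [AddCommGroup E] [Module ℝ E] (Q : E →ₗ[ℝ] E →ₗ[ℝ] ℝ)
variable (E₁ E₂ : Submodule ℝ E) (P₁ P₂ : E →ₗ[ℝ] E)

lemma split_unique (hinf : E₁ ⊓ E₂ = ⊥)
    (hP₁mem : ∀ x : E, P₁ x ∈ E₁) (hP₂mem : ∀ x : E, P₂ x ∈ E₂)
    (hPsum : ∀ x : E, P₁ x + P₂ x = x)
    {u v z : E} (hu : u ∈ E₁) (hv : v ∈ E₂) (huv : u + v = z) :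
    P₁ z = u ∧ P₂ z = v := by
  have h1 : P₁ z + P₂ z = u + v := by rw [hPsum z, huv]
  have h2 : P₁ z - u = v - P₂ z := by
    have := sub_eq_sub_iff_add_eq_add.mpr (by rw [h1]; abel :
      P₁ z + P₂ z = v + u)
    exact this
  have hm1 : P₁ z - u ∈ E₁ := sub_mem (hP₁mem z) hu
  have hm2 : P₁ z - u ∈ E₂ := h2 ▸ sub_mem hv (hP₂mem z)
  have : P₁ z - u ∈ E₁ ⊓ E₂ := ⟨hm1, hm2⟩
  rw [hinf, Submodule.mem_bot] at this
  have e1 : P₁ z = u := by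
    have := sub_eq_zero.mp this; exact this
  refine ⟨e1, ?_⟩
  have h3 : u + P₂ z = u + v := by
    have h4 := hPsum z
    rw [e1] at h4
    rw [h4, huv]
  exact add_left_cancel h3

lemma Q_pythagoras (hQsymm : ∀ x y : E, Q x y = Q y x)
    (horth : ∀ a ∈ E₁, ∀ b ∈ E₂, Q a b = 0)
    (hP₁mem : ∀ x : E, P₁ x ∈ E₁) (hP₂mem : ∀ x : E, P₂ x ∈ E₂)
    (hPsum : ∀ x : E, P₁ x + P₂ x = x) (z : E) :
    Q z z = Q (P₁ z) (P₁ z) + Q (P₂ z) (P₂ z) := by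
  conv_lhs => rw [← hPsum z]
  simp only [map_add, LinearMap.add_apply]
  rw [horth _ (hP₁mem z) _ (hP₂mem z), hQsymm (P₂ z) (P₁ z),
    horth _ (hP₁mem z) _ (hP₂mem z)]
  ring

lemma normQ_proj_le (hQsymm : ∀ x y : E, Q x y = Q y x)
    (hQpos : ∀ x : E, x ≠ 0 → 0 < Q x x)
    (horth : ∀ a ∈ E₁, ∀ b ∈ E₂, Q a b = 0)
    (hP₁mem : ∀ x : E, P₁ x ∈ E₁) (hP₂mem : ∀ x : E, P₂ x ∈ E₂)
    (hPsum : ∀ x : E, P₁ x + P₂ x = x) (z : E) :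
    normQ Q (P₁ z) ≤ normQ Q z ∧ normQ Q (P₂ z) ≤ normQ Q z := by
  have hp := Q_pythagoras Q E₁ E₂ P₁ P₂ hQsymm horth hP₁mem hP₂mem hPsum z
  have hQnn := Q_nonneg Q hQpos
  constructor
  · exact Real.sqrt_le_sqrt (by linarith [hQnn (P₂ z)])
  · exact Real.sqrt_le_sqrt (by linarith [hQnn (P₁ z)])

/-- If the E₂-component is dominated by the E₁-component, the whole Q-norm is at most
twice the E₁-component. -/
lemma normQ_le_two_proj (hQsymm : ∀ x y : E, Q x y = Q y x)
    (hQpos : ∀ x : E, x ≠ 0 → 0 < Q x x)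
    (horth : ∀ a ∈ E₁, ∀ b ∈ E₂, Q a b = 0)
    (hP₁mem : ∀ x : E, P₁ x ∈ E₁) (hP₂mem : ∀ x : E, P₂ x ∈ E₂)
    (hPsum : ∀ x : E, P₁ x + P₂ x = x) (z : E)
    (hcone : normQ Q (P₂ z) ≤ normQ Q (P₁ z)) :
    normQ Q z ≤ 2 * normQ Q (P₁ z) := by
  have hp := Q_pythagoras Q E₁ E₂ P₁ P₂ hQsymm horth hP₁mem hP₂mem hPsum z
  have h1 := normQ_sq Q hQpos (P₁ z)
  have h2 := normQ_sq Q hQpos (P₂ z)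
  have h2' : Q (P₂ z) (P₂ z) ≤ Q (P₁ z) (P₁ z) := by
    rw [← h1, ← h2]
    have := normQ_nonneg Q (P₂ z)
    nlinarith
  have hb : Q z z ≤ (2 * normQ Q (P₁ z)) ^ 2 := by
    rw [hp]; nlinarith [h1]
  calc normQ Q z = Real.sqrt (Q z z) := rfl
    _ ≤ Real.sqrt ((2 * normQ Q (P₁ z)) ^ 2) := Real.sqrt_le_sqrt hb
    _ = 2 * normQ Q (P₁ z) := Real.sqrt_sq (by linarith [normQ_nonneg Q (P₁ z)])

lemma proj_comm_T (hinf : E₁ ⊓ E₂ = ⊥)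
    (hP₁mem : ∀ x : E, P₁ x ∈ E₁) (hP₂mem : ∀ x : E, P₂ x ∈ E₂)
    (hPsum : ∀ x : E, P₁ x + P₂ x = x)
    (T : E →ₗ[ℝ] E)
    (hT₁ : ∀ x ∈ E₁, T x ∈ E₁) (hT₂ : ∀ x ∈ E₂, T x ∈ E₂) (z : E) :
    P₁ (T z) = T (P₁ z) ∧ P₂ (T z) = T (P₂ z) := by
  refine split_unique E₁ E₂ P₁ P₂ hinf hP₁mem hP₂mem hPsum
    (hT₁ _ (hP₁mem z)) (hT₂ _ (hP₂mem z)) ?_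
  rw [← map_add, hPsum]

end Split


theorem stmt9_key {E : Type*} [NormedAddCommGroup E] [NormedSpace ℝ E] [CompleteSpace E]
    (Q : E →ₗ[ℝ] E →ₗ[ℝ] ℝ)
    (hQsymm : ∀ x y : E, Q x y = Q y x)
    (hQpos : ∀ x : E, x ≠ 0 → 0 < Q x x)
    (C_Q : ℝ) (hCQpos : 0 < C_Q)
    (hQbd : ∀ x y : E, |Q x y| ≤ C_Q * ‖x‖ * ‖y‖)
    (E₁ E₂ : Submodule ℝ E)
    (hinf : E₁ ⊓ E₂ = ⊥) (hsup : E₁ ⊔ E₂ = ⊤)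
    (horth : ∀ a ∈ E₁, ∀ b ∈ E₂, Q a b = 0)
    (P₁ P₂ : E →ₗ[ℝ] E)
    (hP₁mem : ∀ x : E, P₁ x ∈ E₁) (hP₂mem : ∀ x : E, P₂ x ∈ E₂)
    (hPsum : ∀ x : E, P₁ x + P₂ x = x)
    (T : E →L[ℝ] E)
    (hT₁ : ∀ x ∈ E₁, T x ∈ E₁) (hT₂ : ∀ x ∈ E₂, T x ∈ E₂)
    (lam mu : ℝ) (hlam : 1 < lam) (hmu0 : 0 < mu) (hmulam : mu < lam)
    (hTexp : ∀ x ∈ E₁, lam * normQ Q x ≤ normQ Q (T x))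
    (hTcon : ∀ x ∈ E₂, normQ Q (T x) ≤ mu * normQ Q x)
    (Ψ : E → E) (hΨcont : Continuous Ψ) (hΨ0 : Ψ 0 = 0)
    (hLip : ∀ ε : ℝ, 0 < ε → ∃ r > 0, ∀ x y : E, ‖x‖ < r → ‖y‖ < r →
      normQ Q ((Ψ x - T x) - (Ψ y - T y)) ≤ ε * normQ Q (x - y))
    (G : Set (E → E))
    (hGbij : ∀ g ∈ G, Function.Bijective g)
    (hGcomp : ∀ g ∈ G, ∀ h ∈ G, g ∘ h ∈ G)
    (hGinv : ∀ g ∈ G, ∃ g' ∈ G, g' ∘ g = id ∧ g ∘ g' = id)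
    (hGΨ : ∀ g ∈ G, g ∘ Ψ = Ψ ∘ g)
    (rbar : ℝ) (hrbar : 0 < rbar)
    (hGlip : ∀ g ∈ G, ∀ x y : E,
      ‖x‖ < rbar → ‖y‖ < rbar → ‖g x‖ < rbar → ‖g y‖ < rbar →
      (1 / 2) * ‖x - y‖ ≤ ‖g x - g y‖ ∧ ‖g x - g y‖ ≤ 2 * ‖x - y‖)
    (r₀ : ℝ) (hr₀ : 0 < r₀)
    (d₀ : ℝ → ℝ)
    (hd₀cont : ContinuousOn d₀ (Set.Ico 0 r₀))
    (hd₀mono : StrictMonoOn d₀ (Set.Ico 0 r₀))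
    (hd₀zero : d₀ 0 = 0)
    (hR1 : ∀ x : E, ‖x‖ < r₀ → normQ Q (P₂ x) ≤ normQ Q (P₁ x) →
      d₀ ‖x‖ ≤ Metric.infDist x {y : E | ∃ g ∈ G, y = g 0})
    (r₁ : ℝ) (hr₁ : 0 < r₁)
    (δ₀ : ℝ → ℝ) (hδ₀cont : Continuous δ₀) (hδ₀zero : δ₀ 0 = 0)
    (hR2 : ∀ r' : ℝ, r' ≤ r₁ → ∀ g ∈ G, ∀ x y : E,
      ‖x‖ < r' / 3 → ‖y‖ < r' / 3 → ‖g x‖ < r' / 3 →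
      ‖g y‖ < r' ∧
      normQ Q (P₁ x - P₁ y) - δ₀ r' * normQ Q (x - y) ≤
        normQ Q (P₁ (g y) - P₁ (g x)) ∧
      normQ Q (P₂ (g y) - P₂ (g x)) ≤
        normQ Q (P₂ x - P₂ y) + δ₀ r' * normQ Q (x - y)) :
    ∃ s₀ > 0, ∀ s : ℝ, 0 < s → s ≤ s₀ →
      ∀ x ∈ tubularInvariantSet Ψ G s ∩ Metric.ball 0 s,
        ∀ y ∈ Metric.ball (0 : E) s,
          normQ Q (P₂ x - P₂ y) < normQ Q (P₁ x - P₁ y) →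
          y ∉ tubularInvariantSet Ψ G s := by
  have hQnn := Q_nonneg Q hQpos
  -- choice of ε and the Lipschitz radius
  set ε := min ((lam - 1) / 8) ((lam - mu) / 8) with hεdef
  have hεa : ε ≤ (lam - 1) / 8 := min_le_left _ _
  have hεb : ε ≤ (lam - mu) / 8 := min_le_right _ _
  have hε0 : 0 < ε := lt_min (by linarith) (by linarith)
  obtain ⟨rε, hrε0, hLipε⟩ := hLip ε hε0
  -- hyperbolicity constants
  set A := lam - 2 * ε with hAdef
  set B := mu + 2 * ε with hBdef
  have hA1 : 1 < A := by rw [hAdef]; linarith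
  have hA0 : 0 < A := by linarith
  have hB0 : 0 < B := by rw [hBdef]; linarith
  have hBA : B + (lam - mu) / 2 ≤ A := by rw [hAdef, hBdef]; linarith
  set κ := (1 + A) / 2 with hκdef
  have hκ1 : 1 < κ := by rw [hκdef]; linarith
  set δb := min ((A - B) / (4 * A)) ((A - 1) / (4 * A)) with hδbdef
  have hδb0 : 0 < δb :=
    lt_min (div_pos (by linarith) (by linarith)) (div_pos (by linarith) (by linarith))
  -- continuity of δ₀ at 0
  obtain ⟨η, hη0, hη⟩ := Metric.continuous_iff.mp hδ₀cont 0 δb hδb0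
  -- the radius r'
  set r' := min (min (r₁ / 3) (rbar / 4)) (min (r₀ / 4) (η / 2)) with hr'def
  have hr'r₁ : r' ≤ r₁ / 3 := le_trans (min_le_left _ _) (min_le_left _ _)
  have hr'rbar : r' ≤ rbar / 4 := le_trans (min_le_left _ _) (min_le_right _ _)
  have hr'r₀ : r' ≤ r₀ / 4 := le_trans (min_le_right _ _) (min_le_left _ _)
  have hr'η : r' ≤ η / 2 := le_trans (min_le_right _ _) (min_le_right _ _)
  have hr'0 : 0 < r' := by
    apply lt_min (lt_min (by linarith) (by linarith)) (lt_min (by linarith) (by linarith))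
  have hδr' : δ₀ r' < δb := by
    have h := hη r' (by rw [Real.dist_eq, sub_zero, abs_of_pos hr'0]; linarith)
    rw [Real.dist_eq, hδ₀zero, sub_zero] at h
    exact lt_of_le_of_lt (le_abs_self _) h
  set δ := max (δ₀ r') 0 with hδdef
  have hδ0 : 0 ≤ δ := le_max_right _ _
  have hδδb : δ ≤ δb := max_le hδr'.le hδb0.le
  have hδle : δ₀ r' ≤ δ := le_max_left _ _
  have h4δ1 : 4 * A * δ ≤ A - B := by
    have h := le_trans hδδb (min_le_left _ _)
    rw [le_div_iff₀ (by linarith : (0:ℝ) < 4 * A)] at h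
    linarith
  have h4δ2 : 4 * A * δ ≤ A - 1 := by
    have h := le_trans hδδb (min_le_right _ _)
    rw [le_div_iff₀ (by linarith : (0:ℝ) < 4 * A)] at h
    linarith
  have hδlt : δ < 1/4 := by nlinarith only [h4δ2, hA0, hA1]
  -- continuity of Ψ at 0
  obtain ⟨σ₁, hσ₁0, hσ₁⟩ := Metric.continuous_iff.mp hΨcont 0 (r' / 3) (by positivity)
  set m := min (min σ₁ rε) (min r₀ rbar) with hmdef
  have hm0 : 0 < m :=
    lt_min (lt_min hσ₁0 hrε0) (lt_min hr₀ hrbar)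
  set σ := m / 2 with hσdef
  have hσ0 : 0 < σ := by positivity
  have hσσ₁ : σ < σ₁ := by
    have : m ≤ σ₁ := le_trans (min_le_left _ _) (min_le_left _ _)
    rw [hσdef]; linarith
  have hσrε : σ < rε := by
    have : m ≤ rε := le_trans (min_le_left _ _) (min_le_right _ _)
    rw [hσdef]; linarith
  have hσr₀ : σ < r₀ := by
    have : m ≤ r₀ := le_trans (min_le_right _ _) (min_le_left _ _)
    rw [hσdef]; linarith
  have hσrbar : σ < rbar := by
    have : m ≤ rbar := le_trans (min_le_right _ _) (min_le_right _ _)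
    rw [hσdef]; linarith
  have hΨσ : ∀ z : E, ‖z‖ ≤ σ → ‖Ψ z‖ < r' / 3 := by
    intro z hz
    have h := hσ₁ z (by rw [dist_zero_right]; linarith)
    rwa [hΨ0, dist_zero_right] at h
  have hd₀σ : 0 < d₀ (σ / 2) := by
    have h := hd₀mono (a := 0) (b := σ / 2) (Set.mem_Ico.mpr ⟨le_refl 0, hr₀⟩)
      (Set.mem_Ico.mpr ⟨by linarith, by linarith⟩) (by linarith)
    rwa [hd₀zero] at h
  -- the smallness threshold
  set s₀ := min (min (σ / 2) (r' / 6)) (min (d₀ (σ / 2) / 4) (rbar / 2)) with hs₀def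
  have hs₀0 : 0 < s₀ :=
    lt_min (lt_min (by linarith) (by linarith)) (lt_min (by linarith) (by linarith))
  clear_value ε A B κ δb δ m σ r' s₀
  refine ⟨s₀, hs₀0, ?_⟩
  intro s hs0 hss₀
  rw [hs₀def] at hss₀
  have hsσ : s ≤ σ / 2 := le_trans hss₀ (le_trans (min_le_left _ _) (min_le_left _ _))
  have hsr' : s ≤ r' / 6 := le_trans hss₀ (le_trans (min_le_left _ _) (min_le_right _ _))
  have hsd₀ : s ≤ d₀ (σ / 2) / 4 :=
    le_trans hss₀ (le_trans (min_le_right _ _) (min_le_left _ _))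
  have hsrbar : s ≤ rbar / 2 := le_trans hss₀ (le_trans (min_le_right _ _) (min_le_right _ _))
  have hsσ' : s ≤ σ := by linarith
  intro x hx y hy hconeV hyW
  obtain ⟨hxW, hxB⟩ := hx
  have hxB' : ‖x‖ < s := by rwa [mem_ball_zero_iff] at hxB
  have hyB' : ‖y‖ < s := by rwa [mem_ball_zero_iff] at hy
  simp only [tubularInvariantSet, Set.mem_setOf_eq] at hxW hyW
  choose g hgG hgs using hxW
  choose g' hg'G hg's using hyW
  -- the one-step hyperbolic estimate
  have step : ∀ p q : E, ‖p‖ ≤ σ → ‖q‖ ≤ σ →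
      normQ Q (P₂ (q - p)) ≤ normQ Q (P₁ (q - p)) →
      ∀ h, h ∈ G → ‖h (Ψ p)‖ ≤ s →
      ‖h (Ψ q)‖ < r' ∧
      normQ Q (P₂ (h (Ψ q) - h (Ψ p))) ≤ normQ Q (P₁ (h (Ψ q) - h (Ψ p))) ∧
      κ * normQ Q (P₁ (q - p)) ≤ normQ Q (P₁ (h (Ψ q) - h (Ψ p))) := by
    intro p q hp hq hcone h hhG hhs
    have hPT : ∀ z : E, P₁ (T z) = T (P₁ z) ∧ P₂ (T z) = T (P₂ z) := by
      intro z
      refine split_unique E₁ E₂ P₁ P₂ hinf hP₁mem hP₂mem hPsum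
        (hT₁ _ (hP₁mem z)) (hT₂ _ (hP₂mem z)) ?_
      rw [← map_add, hPsum]
    have hsplit : Ψ q - Ψ p = T (q - p) + ((Ψ q - T q) - (Ψ p - T p)) := by
      rw [map_sub]; abel
    have e1 : P₁ (Ψ q - Ψ p) = T (P₁ (q - p)) + P₁ ((Ψ q - T q) - (Ψ p - T p)) := by
      rw [hsplit, map_add, (hPT (q - p)).1]
    have e2 : P₂ (Ψ q - Ψ p) = T (P₂ (q - p)) + P₂ ((Ψ q - T q) - (Ψ p - T p)) := by
      rw [hsplit, map_add, (hPT (q - p)).2]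
    have hn1 : 0 ≤ normQ Q (P₁ (q - p)) := normQ_nonneg Q _
    have herr : normQ Q ((Ψ q - T q) - (Ψ p - T p)) ≤ ε * normQ Q (q - p) :=
      hLipε q p (lt_of_le_of_lt hq hσrε) (lt_of_le_of_lt hp hσrε)
    have hqp2 : normQ Q (q - p) ≤ 2 * normQ Q (P₁ (q - p)) :=
      normQ_le_two_proj Q E₁ E₂ P₁ P₂ hQsymm hQpos horth hP₁mem hP₂mem hPsum _ hcone
    have herr' : normQ Q ((Ψ q - T q) - (Ψ p - T p)) ≤ 2 * ε * normQ Q (P₁ (q - p)) := by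
      calc normQ Q ((Ψ q - T q) - (Ψ p - T p)) ≤ ε * normQ Q (q - p) := herr
        _ ≤ ε * (2 * normQ Q (P₁ (q - p))) := mul_le_mul_of_nonneg_left hqp2 hε0.le
        _ = 2 * ε * normQ Q (P₁ (q - p)) := by ring
    have hprojle := normQ_proj_le Q E₁ E₂ P₁ P₂ hQsymm hQpos horth hP₁mem hP₂mem hPsum
      ((Ψ q - T q) - (Ψ p - T p))
    -- lower bound for the expanding component after Ψ
    have hlow : A * normQ Q (P₁ (q - p)) ≤ normQ Q (P₁ (Ψ q - Ψ p)) := by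
      have h1 := hTexp (P₁ (q - p)) (hP₁mem _)
      have h2 := normQ_sub_le Q hQsymm hQpos (T (P₁ (q - p)))
        (P₁ ((Ψ q - T q) - (Ψ p - T p)))
      rw [← e1] at h2
      have h3 : normQ Q (P₁ ((Ψ q - T q) - (Ψ p - T p))) ≤
          2 * ε * normQ Q (P₁ (q - p)) := le_trans hprojle.1 herr'
      rw [hAdef]
      linarith only [h1, h2, h3]
    -- upper bound for the contracting component after Ψ
    have hupp : normQ Q (P₂ (Ψ q - Ψ p)) ≤ B * normQ Q (P₁ (q - p)) := by
      have h1 := hTcon (P₂ (q - p)) (hP₂mem _)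
      have h2 := normQ_add_le Q hQsymm hQpos (T (P₂ (q - p)))
        (P₂ ((Ψ q - T q) - (Ψ p - T p)))
      rw [← e2] at h2
      have h3 : normQ Q (P₂ ((Ψ q - T q) - (Ψ p - T p))) ≤
          2 * ε * normQ Q (P₁ (q - p)) := le_trans hprojle.2 herr'
      have h4 : mu * normQ Q (P₂ (q - p)) ≤ mu * normQ Q (P₁ (q - p)) :=
        mul_le_mul_of_nonneg_left hcone hmu0.le
      rw [hBdef]
      linarith only [h1, h2, h3, h4]
    have hm1 : 0 ≤ normQ Q (P₁ (Ψ q - Ψ p)) := normQ_nonneg Q _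
    have hconeΨ : normQ Q (P₂ (Ψ q - Ψ p)) ≤ normQ Q (P₁ (Ψ q - Ψ p)) := by
      have hBn : B * normQ Q (P₁ (q - p)) ≤ A * normQ Q (P₁ (q - p)) :=
        mul_le_mul_of_nonneg_right (by linarith only [hBA, hmulam]) hn1
      linarith only [hupp, hBn, hlow]
    have hΨ2 : normQ Q (Ψ q - Ψ p) ≤ 2 * normQ Q (P₁ (Ψ q - Ψ p)) :=
      normQ_le_two_proj Q E₁ E₂ P₁ P₂ hQsymm hQpos horth hP₁mem hP₂mem hPsum _ hconeΨ
    -- the group step via (R2)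
    have hr'le : r' ≤ r₁ := by linarith
    obtain ⟨hc1, hc2, hc3⟩ := hR2 r' hr'le h hhG (Ψ p) (Ψ q) (hΨσ p hp) (hΨσ q hq)
      (lt_of_le_of_lt hhs (by linarith only [hsr', hr'0]))
    have eA1 : normQ Q (P₁ (Ψ p) - P₁ (Ψ q)) = normQ Q (P₁ (Ψ q - Ψ p)) := by
      rw [← map_sub, show Ψ p - Ψ q = -(Ψ q - Ψ p) from (neg_sub _ _).symm, map_neg,
        normQ_neg]
    have eA2 : normQ Q (P₂ (Ψ p) - P₂ (Ψ q)) = normQ Q (P₂ (Ψ q - Ψ p)) := by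
      rw [← map_sub, show Ψ p - Ψ q = -(Ψ q - Ψ p) from (neg_sub _ _).symm, map_neg,
        normQ_neg]
    have eB : normQ Q (Ψ p - Ψ q) = normQ Q (Ψ q - Ψ p) := normQ_sub_rev Q _ _
    have eC1 : P₁ (h (Ψ q)) - P₁ (h (Ψ p)) = P₁ (h (Ψ q) - h (Ψ p)) := (map_sub _ _ _).symm
    have eC2 : P₂ (h (Ψ q)) - P₂ (h (Ψ p)) = P₂ (h (Ψ q) - h (Ψ p)) := (map_sub _ _ _).symm
    rw [eA1, eB, eC1] at hc2
    rw [eA2, eB, eC2] at hc3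
    have hδN : δ₀ r' * normQ Q (Ψ q - Ψ p) ≤ δ * (2 * normQ Q (P₁ (Ψ q - Ψ p))) := by
      have hN0 : 0 ≤ normQ Q (Ψ q - Ψ p) := normQ_nonneg Q _
      exact mul_le_mul hδle hΨ2 hN0 hδ0
    have hM1 : (1 - 2 * δ) * normQ Q (P₁ (Ψ q - Ψ p)) ≤
        normQ Q (P₁ (h (Ψ q) - h (Ψ p))) := by linarith only [hc2, hδN]
    have hM2 : normQ Q (P₂ (h (Ψ q) - h (Ψ p))) ≤
        normQ Q (P₂ (Ψ q - Ψ p)) + δ * (2 * normQ Q (P₁ (Ψ q - Ψ p))) := by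
        linarith only [hc3, hδN]
    refine ⟨hc1, ?_, ?_⟩
    · -- cone invariance
      have t1 := mul_le_mul_of_nonneg_right h4δ1 hm1
      have t2 := mul_le_mul_of_nonneg_left hlow hB0.le
      have t4 := mul_le_mul_of_nonneg_left hupp hA0.le
      have hmid : normQ Q (P₂ (Ψ q - Ψ p)) + δ * (2 * normQ Q (P₁ (Ψ q - Ψ p))) ≤
          (1 - 2 * δ) * normQ Q (P₁ (Ψ q - Ψ p)) := by
        nlinarith only [t1, t2, t4, hA0, hm1, hn1, hδ0]
      linarith only [hM1, hM2, hmid]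
    · -- expansion by κ
      have hAκ : (1 - 2 * δ) * A ≥ κ := by
        rw [hκdef]; linarith only [h4δ2]
      have h1δ : (0:ℝ) ≤ 1 - 2 * δ := by linarith only [hδlt]
      calc κ * normQ Q (P₁ (q - p)) ≤ ((1 - 2*δ) * A) * normQ Q (P₁ (q - p)) :=
            mul_le_mul_of_nonneg_right hAκ hn1
        _ = (1 - 2*δ) * (A * normQ Q (P₁ (q - p))) := by ring
        _ ≤ (1 - 2*δ) * normQ Q (P₁ (Ψ q - Ψ p)) :=
            mul_le_mul_of_nonneg_left hlow h1δ
        _ ≤ normQ Q (P₁ (h (Ψ q) - h (Ψ p))) := hM1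

  -- the recentring estimate keeping orbits close
  have bound : ∀ a b v : E, ∀ k k' : E → E, k ∈ G → k' ∈ G → k' ∘ k = id →
      k v = b → ‖v‖ ≤ s → ‖a‖ ≤ s → ‖b‖ < r' →
      normQ Q (P₂ (b - a)) ≤ normQ Q (P₁ (b - a)) → ‖b‖ ≤ σ := by
    intro a b v k k' hkG hk'G hk'k hkv hv ha hb hcone
    have h3r : 3 * r' ≤ r₁ := by linarith only [hr'r₁, hr₁]
    have hdiv : 3 * r' / 3 = r' := by ring
    obtain ⟨hk0, -, -⟩ := hR2 (3 * r') h3r k hkG v 0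
      (by rw [hdiv]; linarith only [hv, hsr', hr'0])
      (by rw [hdiv]; simpa using hr'0)
      (by rw [hdiv, hkv]; exact hb)
    have hk'b : k' b = v := by rw [← hkv]; exact congrFun hk'k v
    have hk'k0 : k' (k 0) = 0 := congrFun hk'k 0
    have hlip := hGlip k' hk'G b (k 0)
      (by linarith only [hb, hr'rbar, hrbar])
      (by linarith only [hk0, hr'rbar, hrbar])
      (by rw [hk'b]; linarith only [hv, hsrbar, hrbar])
      (by rw [hk'k0]; simpa using hrbar)
    have h1 := hlip.1
    rw [hk'b, hk'k0, sub_zero] at h1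
    have hbk0 : ‖b - k 0‖ ≤ 2 * s := by linarith only [h1, hv]
    have hcnorm : ‖b - a‖ < r₀ := by
      have h := norm_sub_le b a
      linarith only [h, hb, ha, hr'r₀, hsσ, hσr₀, hr₀]
    have hR1c := hR1 (b - a) hcnorm hcone
    have hmem : k 0 ∈ {y : E | ∃ g ∈ G, y = g 0} := ⟨k, hkG, rfl⟩
    have hinfd : Metric.infDist (b - a) {y : E | ∃ g ∈ G, y = g 0} ≤ 3 * s := by
      have h := Metric.infDist_le_dist_of_mem (x := b - a) hmem
      have hd : dist (b - a) (k 0) ≤ 3 * s := by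
        rw [dist_eq_norm, show b - a - k 0 = (b - k 0) - a from by abel]
        have h2 := norm_sub_le (b - k 0) a
        linarith only [h2, hbk0, ha]
      linarith only [h, hd]
    have hd₀c : d₀ ‖b - a‖ ≤ 3 * s := le_trans hR1c hinfd
    have hclt : ‖b - a‖ < σ / 2 := by
      by_contra hge
      push_neg at hge
      have hmem1 : σ / 2 ∈ Set.Ico (0:ℝ) r₀ := ⟨by linarith only [hσ0], by linarith only [hσr₀, hr₀]⟩
      have hmem2 : ‖b - a‖ ∈ Set.Ico (0:ℝ) r₀ := ⟨norm_nonneg _, hcnorm⟩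
      have hmono := hd₀mono.monotoneOn hmem1 hmem2 hge
      linarith only [hmono, hd₀c, hsd₀, hd₀σ]
    have hba : ‖b‖ ≤ ‖b - a‖ + ‖a‖ := by
      have h := norm_add_le (b - a) a
      rw [sub_add_cancel] at h
      exact h
    linarith only [hba, hclt, ha, hsσ]
  have boundIdx : ∀ m : ℕ, ‖g m (Ψ^[m] y)‖ < r' →
      normQ Q (P₂ (g m (Ψ^[m] y) - g m (Ψ^[m] x))) ≤
        normQ Q (P₁ (g m (Ψ^[m] y) - g m (Ψ^[m] x))) →
      ‖g m (Ψ^[m] y)‖ ≤ σ := by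
    intro m hbr hcone
    obtain ⟨j, hjG, hj1, hj2⟩ := hGinv (g' m) (hg'G m)
    have hkG : g m ∘ j ∈ G := hGcomp _ (hgG m) _ hjG
    obtain ⟨k', hk'G, hk'1, hk'2⟩ := hGinv _ hkG
    have hkv : (g m ∘ j) (g' m (Ψ^[m] y)) = g m (Ψ^[m] y) := by
      have h := congrFun hj1 (Ψ^[m] y)
      simp only [Function.comp_apply, id_eq] at h ⊢
      rw [h]
    exact bound (g m (Ψ^[m] x)) (g m (Ψ^[m] y)) (g' m (Ψ^[m] y)) _ k' hkG hk'G hk'1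
      hkv (hg's m) (hgs m) hbr hcone
  -- the main induction
  have main : ∀ n : ℕ,
      ‖g (n+1) (Ψ^[n+1] y)‖ ≤ σ ∧
      normQ Q (P₂ (g (n+1) (Ψ^[n+1] y) - g (n+1) (Ψ^[n+1] x))) ≤
        normQ Q (P₁ (g (n+1) (Ψ^[n+1] y) - g (n+1) (Ψ^[n+1] x))) ∧
      κ ^ (n+1) * normQ Q (P₁ (y - x)) ≤
        normQ Q (P₁ (g (n+1) (Ψ^[n+1] y) - g (n+1) (Ψ^[n+1] x))) := by
    intro n
    induction n with
    | zero =>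
      have hcone0 : normQ Q (P₂ (y - x)) ≤ normQ Q (P₁ (y - x)) := by
        have e1 : normQ Q (P₂ (y - x)) = normQ Q (P₂ x - P₂ y) := by
          rw [map_sub, normQ_sub_rev]
        have e2 : normQ Q (P₁ (y - x)) = normQ Q (P₁ x - P₁ y) := by
          rw [map_sub, normQ_sub_rev]
        rw [e1, e2]
        exact hconeV.le
      have hstep := step x y (by linarith only [hxB', hsσ, hσ0])
        (by linarith only [hyB', hsσ, hσ0]) hcone0 (g 1) (hgG 1) (hgs 1)
      obtain ⟨hb1, hcone1, hgrow1⟩ := hstep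
      exact ⟨boundIdx 1 hb1 hcone1, hcone1, by simpa using hgrow1⟩
    | succ n ih =>
      obtain ⟨ihb, ihcone, ihgrow⟩ := ih
      obtain ⟨j, hjG, hj1, hj2⟩ := hGinv (g (n+1)) (hgG (n+1))
      have hhG : g (n+1+1) ∘ j ∈ G := hGcomp _ (hgG (n+1+1)) _ hjG
      have hΨa : Ψ (g (n+1) (Ψ^[n+1] x)) = g (n+1) (Ψ^[n+1+1] x) := by
        have hc := congrFun (hGΨ (g (n+1)) (hgG (n+1))) (Ψ^[n+1] x)
        simp only [Function.comp_apply] at hc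
        rw [Function.iterate_succ_apply' Ψ (n+1) x]
        exact hc.symm
      have hΨb : Ψ (g (n+1) (Ψ^[n+1] y)) = g (n+1) (Ψ^[n+1+1] y) := by
        have hc := congrFun (hGΨ (g (n+1)) (hgG (n+1))) (Ψ^[n+1] y)
        simp only [Function.comp_apply] at hc
        rw [Function.iterate_succ_apply' Ψ (n+1) y]
        exact hc.symm
      have hja : ∀ w : E, j (g (n+1) w) = w := by
        intro w
        have hc := congrFun hj1 w
        simpa only [Function.comp_apply, id_eq] using hc
      have hha : (g (n+1+1) ∘ j) (Ψ (g (n+1) (Ψ^[n+1] x))) = g (n+1+1) (Ψ^[n+1+1] x) := by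
        rw [hΨa]
        simp only [Function.comp_apply]
        rw [hja]
      have hhb : (g (n+1+1) ∘ j) (Ψ (g (n+1) (Ψ^[n+1] y))) = g (n+1+1) (Ψ^[n+1+1] y) := by
        rw [hΨb]
        simp only [Function.comp_apply]
        rw [hja]
      have hstep := step (g (n+1) (Ψ^[n+1] x)) (g (n+1) (Ψ^[n+1] y))
        (le_trans (hgs (n+1)) hsσ') ihb ihcone (g (n+1+1) ∘ j) hhG
        (by rw [hha]; exact hgs (n+1+1))
      obtain ⟨hb2, hcone2, hgrow2⟩ := hstep
      rw [hhb] at hb2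
      rw [hha, hhb] at hcone2 hgrow2
      refine ⟨boundIdx (n+1+1) hb2 hcone2, hcone2, ?_⟩
      have hκ0 : (0:ℝ) < κ := by linarith only [hκ1]
      calc κ ^ (n+1+1) * normQ Q (P₁ (y - x))
          = κ * (κ ^ (n+1) * normQ Q (P₁ (y - x))) := by ring
        _ ≤ κ * normQ Q (P₁ (g (n+1) (Ψ^[n+1] y) - g (n+1) (Ψ^[n+1] x))) :=
            mul_le_mul_of_nonneg_left ihgrow hκ0.le
        _ ≤ _ := hgrow2

  -- final contradiction from unbounded growth
  have hL : 0 < normQ Q (P₁ (y - x)) := by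
    have e : normQ Q (P₁ (y - x)) = normQ Q (P₁ x - P₁ y) := by
      rw [map_sub, normQ_sub_rev]
    rw [e]
    exact lt_of_le_of_lt (normQ_nonneg Q _) hconeV
  obtain ⟨n, hn⟩ :=
    pow_unbounded_of_one_lt (Real.sqrt C_Q * (2 * σ) / normQ Q (P₁ (y - x))) hκ1
  obtain ⟨hbσ, hcone, hgrow⟩ := main n
  have hc1 : normQ Q (P₁ (g (n+1) (Ψ^[n+1] y) - g (n+1) (Ψ^[n+1] x))) ≤
      normQ Q (g (n+1) (Ψ^[n+1] y) - g (n+1) (Ψ^[n+1] x)) :=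
    (normQ_proj_le Q E₁ E₂ P₁ P₂ hQsymm hQpos horth hP₁mem hP₂mem hPsum _).1
  have hc2 := normQ_le_sqrt_norm Q C_Q hCQpos hQbd
    (g (n+1) (Ψ^[n+1] y) - g (n+1) (Ψ^[n+1] x))
  have hc3 : ‖g (n+1) (Ψ^[n+1] y) - g (n+1) (Ψ^[n+1] x)‖ ≤ 2 * σ := by
    have h := norm_sub_le (g (n+1) (Ψ^[n+1] y)) (g (n+1) (Ψ^[n+1] x))
    have h2 := hgs (n+1)
    linarith only [h, h2, hbσ, hsσ']
  have hsq : 0 ≤ Real.sqrt C_Q := Real.sqrt_nonneg _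
  have hM : Real.sqrt C_Q * (2 * σ) < κ ^ n * normQ Q (P₁ (y - x)) := by
    rw [div_lt_iff₀ hL] at hn
    exact hn
  have hpow : κ ^ n * normQ Q (P₁ (y - x)) ≤ κ ^ (n+1) * normQ Q (P₁ (y - x)) := by
    exact mul_le_mul_of_nonneg_right
      (pow_le_pow_right₀ (by linarith only [hκ1]) (Nat.le_succ n)) hL.le
  have hfin : normQ Q (g (n+1) (Ψ^[n+1] y) - g (n+1) (Ψ^[n+1] x)) ≤
      Real.sqrt C_Q * (2 * σ) :=
    le_trans hc2 (mul_le_mul_of_nonneg_left hc3 hsq)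
  linarith only [hgrow, hc1, hfin, hM, hpow]

/-- Under the group-action hypotheses (R0)–(R2), for all sufficiently
small `s > 0` the set `B_s ∩ W₀` is the graph over `E₂` of a map `u : P₂(W₀ ∩ B_s) → E₁`
that is `Q`-Lipschitz with norm one; in particular, if `x ∈ B_s ∩ W₀` and `y ∈ B_s` satisfy
`‖x₂ − y₂‖_Q < ‖x₁ − y₁‖_Q`, then `y ∉ W₀`. -/
theorem stmt9 {E : Type*} [NormedAddCommGroup E] [NormedSpace ℝ E] [CompleteSpace E]
    -- Q is a bounded symmetric positive definite bilinear form on E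
    (Q : E →ₗ[ℝ] E →ₗ[ℝ] ℝ)
    (hQsymm : ∀ x y : E, Q x y = Q y x)
    (hQpos : ∀ x : E, x ≠ 0 → 0 < Q x x)
    (C_Q : ℝ) (hCQpos : 0 < C_Q)
    (hQbd : ∀ x y : E, |Q x y| ≤ C_Q * ‖x‖ * ‖y‖)
    -- E = E₁ ⊕ E₂ is a splitting into Q-orthogonal subspaces, with projections P₁, P₂
    (E₁ E₂ : Submodule ℝ E)
    (hinf : E₁ ⊓ E₂ = ⊥) (hsup : E₁ ⊔ E₂ = ⊤)
    (horth : ∀ a ∈ E₁, ∀ b ∈ E₂, Q a b = 0)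
    (P₁ P₂ : E →ₗ[ℝ] E)
    (hP₁mem : ∀ x : E, P₁ x ∈ E₁) (hP₂mem : ∀ x : E, P₂ x ∈ E₂)
    (hPsum : ∀ x : E, P₁ x + P₂ x = x)
    -- T is a bounded linear map preserving the splitting, expanding on E₁, contracting on E₂
    (T : E →L[ℝ] E)
    (hT₁ : ∀ x ∈ E₁, T x ∈ E₁) (hT₂ : ∀ x ∈ E₂, T x ∈ E₂)
    (lam mu : ℝ) (hlam : 1 < lam) (hmu0 : 0 < mu) (hmulam : mu < lam)
    (hTexp : ∀ x ∈ E₁, lam * normQ Q x ≤ normQ Q (T x))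
    (hTcon : ∀ x ∈ E₂, normQ Q (T x) ≤ mu * normQ Q x)
    -- Ψ is continuous with Ψ 0 = 0 and is Q-Lipschitz approximated by T near 0
    (Ψ : E → E) (hΨcont : Continuous Ψ) (hΨ0 : Ψ 0 = 0)
    (hLip : ∀ ε : ℝ, 0 < ε → ∃ r > 0, ∀ x y : E, ‖x‖ < r → ‖y‖ < r →
      normQ Q ((Ψ x - T x) - (Ψ y - T y)) ≤ ε * normQ Q (x - y))
    -- (R0): G is a group of bijections of E commuting with Ψ, 2-bi-Lipschitz near 0
    (G : Set (E → E))
    (hGbij : ∀ g ∈ G, Function.Bijective g)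
    (hGcomp : ∀ g ∈ G, ∀ h ∈ G, g ∘ h ∈ G)
    (hGinv : ∀ g ∈ G, ∃ g' ∈ G, g' ∘ g = id ∧ g ∘ g' = id)
    (hGΨ : ∀ g ∈ G, g ∘ Ψ = Ψ ∘ g)
    (rbar : ℝ) (hrbar : 0 < rbar)
    (hGlip : ∀ g ∈ G, ∀ x y : E,
      ‖x‖ < rbar → ‖y‖ < rbar → ‖g x‖ < rbar → ‖g y‖ < rbar →
      (1 / 2) * ‖x - y‖ ≤ ‖g x - g y‖ ∧ ‖g x - g y‖ ≤ 2 * ‖x - y‖)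
    -- (R1): E₁ is transverse to the orbit ℛ₀ = {g 0 : g ∈ G} of 0
    (r₀ : ℝ) (hr₀ : 0 < r₀)
    (d₀ : ℝ → ℝ)
    (hd₀cont : ContinuousOn d₀ (Set.Ico 0 r₀))
    (hd₀mono : StrictMonoOn d₀ (Set.Ico 0 r₀))
    (hd₀zero : d₀ 0 = 0)
    (hR1 : ∀ x : E, ‖x‖ < r₀ → normQ Q (P₂ x) ≤ normQ Q (P₁ x) →
      d₀ ‖x‖ ≤ Metric.infDist x {y : E | ∃ g ∈ G, y = g 0})
    -- (R2): to first order, G is non-contracting on E₁ and non-expanding on E₂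
    (r₁ : ℝ) (hr₁ : 0 < r₁)
    (δ₀ : ℝ → ℝ) (hδ₀cont : Continuous δ₀) (hδ₀zero : δ₀ 0 = 0)
    (hR2 : ∀ r' : ℝ, r' ≤ r₁ → ∀ g ∈ G, ∀ x y : E,
      ‖x‖ < r' / 3 → ‖y‖ < r' / 3 → ‖g x‖ < r' / 3 →
      ‖g y‖ < r' ∧
      normQ Q (P₁ x - P₁ y) - δ₀ r' * normQ Q (x - y) ≤
        normQ Q (P₁ (g y) - P₁ (g x)) ∧
      normQ Q (P₂ (g y) - P₂ (g x)) ≤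
        normQ Q (P₂ x - P₂ y) + δ₀ r' * normQ Q (x - y)) :
    ∃ s₀ > 0, ∀ s : ℝ, 0 < s → s ≤ s₀ →
      (∃ u : E → E,
        (∀ a ∈ P₂ '' (tubularInvariantSet Ψ G s ∩ Metric.ball 0 s), u a ∈ E₁) ∧
        tubularInvariantSet Ψ G s ∩ Metric.ball 0 s =
          (fun a => u a + a) '' (P₂ '' (tubularInvariantSet Ψ G s ∩ Metric.ball 0 s)) ∧
        (∀ a ∈ P₂ '' (tubularInvariantSet Ψ G s ∩ Metric.ball 0 s),
          ∀ b ∈ P₂ '' (tubularInvariantSet Ψ G s ∩ Metric.ball 0 s),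
            normQ Q (u a - u b) ≤ normQ Q (a - b))) ∧
      ∀ x ∈ tubularInvariantSet Ψ G s ∩ Metric.ball 0 s,
        ∀ y ∈ Metric.ball (0 : E) s,
          normQ Q (P₂ x - P₂ y) < normQ Q (P₁ x - P₁ y) →
          y ∉ tubularInvariantSet Ψ G s := by
  classical
  obtain ⟨s₀, hs₀0, hkey⟩ := stmt9_key Q hQsymm hQpos C_Q hCQpos hQbd E₁ E₂ hinf hsup
    horth P₁ P₂ hP₁mem hP₂mem hPsum T hT₁ hT₂ lam mu hlam hmu0 hmulam hTexp hTcon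
    Ψ hΨcont hΨ0 hLip G hGbij hGcomp hGinv hGΨ rbar hrbar hGlip r₀ hr₀ d₀ hd₀cont
    hd₀mono hd₀zero hR1 r₁ hr₁ δ₀ hδ₀cont hδ₀zero hR2
  refine ⟨s₀, hs₀0, ?_⟩
  intro s hs0 hss₀
  have hk := hkey s hs0 hss₀
  set S := tubularInvariantSet Ψ G s ∩ Metric.ball (0:E) s with hS
  have hle : ∀ z ∈ S, ∀ w ∈ S, normQ Q (P₁ z - P₁ w) ≤ normQ Q (P₂ z - P₂ w) := by
    intro z hz w hw
    by_contra hlt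
    push_neg at hlt
    exact (hk z hz w hw.2 hlt) hw.1
  have hinj : ∀ z ∈ S, ∀ w ∈ S, P₂ z = P₂ w → z = w := by
    intro z hz w hw hP
    have h0 : normQ Q (P₁ z - P₁ w) ≤ 0 := by
      have h := hle z hz w hw
      rwa [hP, sub_self, normQ_zero] at h
    have h1 : P₁ z - P₁ w = 0 :=
      normQ_eq_zero Q hQpos (le_antisymm h0 (normQ_nonneg _ _))
    have h2 : P₁ z = P₁ w := sub_eq_zero.mp h1
    calc z = P₁ z + P₂ z := (hPsum z).symm
      _ = P₁ w + P₂ w := by rw [h2, hP]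
      _ = w := hPsum w
  have hiff : ∀ a : E, a ∈ P₂ '' S ↔ ∃ z ∈ S, P₂ z = a := by
    intro a
    rw [Set.mem_image]
  refine ⟨⟨fun a => P₁ (Function.invFunOn P₂ S a), ?_, ?_, ?_⟩, ?_⟩
  · intro a _
    exact hP₁mem _
  · apply Set.eq_of_subset_of_subset
    · intro z hz
      have ha : P₂ z ∈ P₂ '' S := ⟨z, hz, rfl⟩
      refine ⟨P₂ z, ha, ?_⟩
      have hex := (hiff (P₂ z)).mp ha
      have hwS : Function.invFunOn P₂ S (P₂ z) ∈ S := Function.invFunOn_mem hex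
      have hwP : P₂ (Function.invFunOn P₂ S (P₂ z)) = P₂ z := Function.invFunOn_eq hex
      have hwz : Function.invFunOn P₂ S (P₂ z) = z := hinj _ hwS z hz hwP
      show P₁ (Function.invFunOn P₂ S (P₂ z)) + P₂ z = z
      rw [hwz]
      exact hPsum z
    · rintro _ ⟨a, ha, rfl⟩
      have hex := (hiff a).mp ha
      have hwS : Function.invFunOn P₂ S a ∈ S := Function.invFunOn_mem hex
      have hwP : P₂ (Function.invFunOn P₂ S a) = a := Function.invFunOn_eq hex
      show P₁ (Function.invFunOn P₂ S a) + a ∈ S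
      have he := hPsum (Function.invFunOn P₂ S a)
      rw [hwP] at he
      rw [he]
      exact hwS
  · intro a ha b hb
    have hexa := (hiff a).mp ha
    have hexb := (hiff b).mp hb
    have h := hle _ (Function.invFunOn_mem hexa) _ (Function.invFunOn_mem hexb)
    rwa [Function.invFunOn_eq hexa, Function.invFunOn_eq hexb] at h
  · intro x hx y hy hlt
    exact hk x hx y hy hlt
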